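/- arXiv:1407.2697 — 4 statements merged into one kernel-verified Lean document; each statement's English description precedes it below -/
import Mathlib

section
/- For a concave function h : ℕ → ℝ with h(0) = 0 and h non-decreasing, the function Ω(x) = Σ_{k=0}^{m-1} (h(k+1) − h(k)) |x_{(k)}|, where |x_{(0)}| ≥ |x_{(1)}| ≥ ... ≥ |x_{(m-1)}| is the decreasing rearrangement of the absolute values of x ∈ ℝ^m, is a convex function of x. -/
/-!
For every permutation `σ`, the function `x ↦ ∑ₖ cₖ |x_{σ k}|` is convex when the weights
`cₖ = h(k+1) - h(k)` are nonnegative (`h` non-decreasing). Since the weights are also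
non-increasing (`h` concave), the rearrangement inequality shows that each of these functions
lies below `Ω`, and `Ω` is the one obtained from the sorting permutation of `|x|`. A pointwise
maximum of convex functions that is attained is convex.
-/

noncomputable def sortedAbs {m : ℕ} (x : Fin m → ℝ) : Fin m → ℝ :=
  fun k => |x (Tuple.sort (fun i => -|x i|) k)|

noncomputable def omegaReg {m : ℕ} (c : ℕ → ℝ) (x : Fin m → ℝ) : ℝ :=
  ∑ k : Fin m, c k * sortedAbs x k

theorem ConvexOn.of_forall_le_of_exists_eq {𝕜 E β ι : Type*} [Semiring 𝕜] [PartialOrder 𝕜]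
    [AddCommMonoid E] [AddCommMonoid β] [PartialOrder β] [IsOrderedAddMonoid β] [SMul 𝕜 E]
    [SMul 𝕜 β] [PosSMulMono 𝕜 β] {s : Set E} {f : E → β} {g : ι → E → β}
    (hs : Convex 𝕜 s) (hg : ∀ i, ConvexOn 𝕜 s (g i)) (hle : ∀ i, ∀ x ∈ s, g i x ≤ f x)
    (hattained : ∀ x ∈ s, ∃ i, f x = g i x) : ConvexOn 𝕜 s f := by
  refine ⟨hs, fun x hx y hy a b ha hb hab => ?_⟩
  obtain ⟨i, hi⟩ := hattained _ (hs hx hy ha hb hab)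
  calc f (a • x + b • y) = g i (a • x + b • y) := hi
    _ ≤ a • g i x + b • g i y := (hg i).2 hx hy ha hb hab
    _ ≤ a • f x + b • f y := by
      gcongr
      exacts [hle i x hx, hle i y hy]

section

variable {m : ℕ}

theorem sortedAbs_antitone (x : Fin m → ℝ) : Antitone (sortedAbs x) := fun _ _ hij => by
  simpa [sortedAbs] using Tuple.monotone_sort (fun i => -|x i|) hij

theorem convexOn_sum_mul_abs_comp {c : ℕ → ℝ} (hc : ∀ k, 0 ≤ c k) (σ : Fin m → Fin m) :
    ConvexOn ℝ Set.univ fun x : Fin m → ℝ => ∑ k : Fin m, c k * |x (σ k)| := by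
  have hterm (k : Fin m) : ConvexOn ℝ Set.univ fun x : Fin m → ℝ => c k * |x (σ k)| := by
    have hcoord := (convexOn_norm convex_univ).comp_linearMap
      (LinearMap.proj (R := ℝ) (φ := fun _ : Fin m => ℝ) (σ k))
    simpa [Real.norm_eq_abs] using hcoord.smul (hc k)
  convert Finset.sum_induction (s := Finset.univ) _ (ConvexOn ℝ Set.univ)
    (fun _ _ => ConvexOn.add) (convexOn_const 0 convex_univ) (fun k _ => hterm k) using 1
  ext x
  simp only [Finset.sum_apply]

theorem sum_mul_abs_comp_perm_le_omegaReg {c : ℕ → ℝ} (hc : Antitone c) (x : Fin m → ℝ)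
    (σ : Equiv.Perm (Fin m)) : ∑ k : Fin m, c k * |x (σ k)| ≤ omegaReg c x := by
  have hmonovary : Monovary (fun k : Fin m => c k) (sortedAbs x) :=
    Antitone.monovary (fun _ _ hij => hc hij) (sortedAbs_antitone x)
  set s := Tuple.sort fun i => -|x i|
  have hsort : ∀ k, |x (σ k)| = sortedAbs x ((σ.trans s⁻¹) k) := by simp [sortedAbs, s]
  simpa only [hsort, omegaReg] using hmonovary.sum_mul_comp_perm_le_sum_mul (σ := σ.trans s⁻¹)

end

theorem omegaReg_convexOn_general (m : ℕ) (h : ℕ → ℝ)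
    (hmono : ∀ k : ℕ, h k ≤ h (k + 1))
    (hconc : ∀ k : ℕ, 1 ≤ k → h (k + 1) - h k ≤ h k - h (k - 1)) :
    ConvexOn ℝ Set.univ (omegaReg (m := m) (fun k => h (k + 1) - h k)) := by
  have hnonneg : ∀ k, 0 ≤ h (k + 1) - h k := fun k => sub_nonneg.2 (hmono k)
  have hanti : Antitone fun k => h (k + 1) - h k :=
    antitone_nat_of_succ_le fun k => by simpa using hconc (k + 1) (Nat.le_add_left 1 k)
  exact ConvexOn.of_forall_le_of_exists_eq convex_univ
    (fun σ : Equiv.Perm (Fin m) => convexOn_sum_mul_abs_comp hnonneg σ)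
    (fun σ x _ => sum_mul_abs_comp_perm_le_omegaReg hanti x σ)
    fun x _ => ⟨Tuple.sort fun i => -|x i|, rfl⟩

/-- for `h : ℕ → ℝ` concave, non-decreasing, with `h 0 = 0`, the
function `Ω(x) = ∑_k (h(k+1) − h k) |x_{(k)}|` (decreasing rearrangement of the
absolute values of `x`) is convex. -/
theorem omegaReg_convexOn (m : ℕ) (h : ℕ → ℝ)
    (h0 : h 0 = 0)
    (hmono : ∀ k : ℕ, h k ≤ h (k + 1))
    (hconc : ∀ k : ℕ, 1 ≤ k → h (k + 1) - h k ≤ h k - h (k - 1)) :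
    ConvexOn ℝ Set.univ (omegaReg (m := m) (fun k => h (k + 1) - h k)) :=
  omegaReg_convexOn_general m h hmono hconc
end

section
/- Let F be a non-decreasing submodular function on 2^E with F(∅) = 0, and let f̂ be its Lovász extension. Then f̂ is convex on ℝ^E, positively homogeneous, and agrees with F on indicator vectors: f̂(1_A) = F(A) for all A ⊆ E. -/
/-!
For an ordering `σ` of `E`, the greedy vector `g_σ(σ k) = F(σ{0,…,k}) - F(σ{0,…,k-1})` satisfies
`g_σ(B) ≤ F(B)` for every `B` by submodularity, with equality on the initial segments of `σ`,
where the sum telescopes. If `τ` sorts `w` decreasingly, Abel summation writes `⟨w, x⟩` as a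
combination of the values `x(τ{0,…,k})` with nonnegative coefficients plus `w(τ(m-1)) · x(E)`;
hence `⟨w, g_σ⟩ ≤ ⟨w, g_τ⟩ = f̂(w)`. So `f̂ = max_σ ⟨·, g_σ⟩` is convex and positively homogeneous,
and `f̂(1_A) = g_σ(A) = F(A)` because `A` is an initial segment of every `σ` that sorts `1_A`.
-/

open Finset

theorem convexOn_univ_of_forall_exists_linearMap_le {E : Type*} [AddCommMonoid E] [Module ℝ E]
    {f : E → ℝ} (h : ∀ x, ∃ ℓ : E →ₗ[ℝ] ℝ, ℓ x = f x ∧ ∀ y, ℓ y ≤ f y) :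
    ConvexOn ℝ Set.univ f := by
  refine ⟨convex_univ, fun x _ y _ a b ha hb _ => ?_⟩
  obtain ⟨ℓ, hℓ, hle⟩ := h (a • x + b • y)
  rw [← hℓ, map_add, map_smul, map_smul]
  exact add_le_add (smul_le_smul_of_nonneg_left (hle x) ha)
    (smul_le_smul_of_nonneg_left (hle y) hb)

theorem sum_range_mul_sub_le_of_antitone {v X Y : ℕ → ℝ} {n : ℕ}
    (hv : ∀ k, k + 1 < n → v (k + 1) ≤ v k) (hXY : ∀ k, X k ≤ Y k) (h0 : X 0 = Y 0)
    (hn : X n = Y n) :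
    ∑ k ∈ range n, v k * (X (k + 1) - X k) ≤ ∑ k ∈ range n, v k * (Y (k + 1) - Y k) := by
  have hparts := sum_range_by_parts v (fun k => (Y (k + 1) - X (k + 1)) - (Y k - X k)) n
  simp only [smul_eq_mul, sum_range_sub (fun k => Y k - X k), h0, hn, sub_self, sub_zero,
    mul_zero, zero_sub] at hparts
  rw [← sub_nonneg, ← sum_sub_distrib]
  calc (0 : ℝ) ≤ ∑ k ∈ range (n - 1), (v k - v (k + 1)) * (Y (k + 1) - X (k + 1)) :=
        sum_nonneg fun k hk => mul_nonneg (sub_nonneg.2 (hv k (by grind))) (sub_nonneg.2 (hXY _))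
    _ = ∑ k ∈ range n, v k * (Y (k + 1) - X (k + 1) - (Y k - X k)) := by
        rw [hparts, ← sum_neg_distrib]
        exact sum_congr rfl fun k _ => by ring
    _ = _ := sum_congr rfl fun k _ => by ring

theorem exists_perm_antitone {α : Type*} [LinearOrder α] {m : ℕ} (w : Fin m → α) :
    ∃ σ : Equiv.Perm (Fin m), Antitone fun k => w (σ k) :=
  ⟨Tuple.sort (OrderDual.toDual ∘ w), fun _ _ hab => Tuple.monotone_sort (OrderDual.toDual ∘ w) hab⟩

namespace Equiv.Perm

variable {m : ℕ}

def initialSegment (σ : Equiv.Perm (Fin m)) (n : ℕ) : Finset (Fin m) :=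
  {i | (σ.symm i : ℕ) < n}

@[simp]
lemma mem_initialSegment {σ : Equiv.Perm (Fin m)} {n : ℕ} {i : Fin m} :
    i ∈ σ.initialSegment n ↔ (σ.symm i : ℕ) < n := by
  simp [initialSegment]

variable (σ : Equiv.Perm (Fin m))

lemma initialSegment_zero : σ.initialSegment 0 = ∅ := by
  ext; simp

lemma initialSegment_of_le {n : ℕ} (h : m ≤ n) : σ.initialSegment n = univ := by
  ext i; simpa using (σ.symm i).isLt.trans_le h

lemma notMem_initialSegment_symm (i : Fin m) : i ∉ σ.initialSegment (σ.symm i) := by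
  simp

lemma initialSegment_symm_succ (i : Fin m) :
    σ.initialSegment (σ.symm i + 1) = insert i (σ.initialSegment (σ.symm i)) := by
  ext j
  simp only [mem_initialSegment, mem_insert, Nat.lt_succ_iff_lt_or_eq, Fin.val_inj,
    σ.symm.injective.eq_iff]
  tauto

lemma initialSegment_succ (k : Fin m) :
    σ.initialSegment (k + 1) = insert (σ k) (σ.initialSegment k) := by
  simpa using σ.initialSegment_symm_succ (σ k)

lemma image_Iio_eq_initialSegment (k : Fin m) : (Iio k).image σ = σ.initialSegment k := by
  ext i
  simp [← Equiv.eq_symm_apply]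

lemma image_Iic_eq_initialSegment (k : Fin m) : (Iic k).image σ = σ.initialSegment (k + 1) := by
  ext i
  simp [← Equiv.eq_symm_apply]

lemma card_initialSegment (k : Fin m) : #(σ.initialSegment k) = k := by
  rw [← image_Iio_eq_initialSegment, card_image_of_injective _ σ.injective, Fin.card_Iio]

lemma card_initialSegment_succ (k : Fin m) : #(σ.initialSegment (k + 1)) = k + 1 := by
  rw [← image_Iic_eq_initialSegment, card_image_of_injective _ σ.injective, Fin.card_Iic]

/-- The Lovász sum formula for the ordering `σ`, for an arbitrary set function `G`: with `G = F`
and `σ` sorting `w` this is `f̂(w)`, with `G` modular it is a dot product. -/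
def lovaszSum (G : Finset (Fin m) → ℝ) (w : Fin m → ℝ) : ℝ :=
  ∑ k : Fin m, w (σ k) * (G (σ.initialSegment (k + 1)) - G (σ.initialSegment k))

lemma dotProduct_eq_lovaszSum (x w : Fin m → ℝ) :
    w ⬝ᵥ x = σ.lovaszSum (fun B => ∑ i ∈ B, x i) w := by
  rw [dotProduct, ← Equiv.sum_comp σ]
  refine sum_congr rfl fun k _ => ?_
  dsimp only
  rw [initialSegment_succ, sum_insert (by simp), add_sub_cancel_right]

lemma lovaszSum_le_of_antitone {G H : Finset (Fin m) → ℝ} {w : Fin m → ℝ}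
    (hw : Antitone fun k => w (σ k))
    (hGH : ∀ n, G (σ.initialSegment n) ≤ H (σ.initialSegment n)) (h0 : G ∅ = H ∅)
    (huniv : G univ = H univ) :
    σ.lovaszSum G w ≤ σ.lovaszSum H w := by
  set v : ℕ → ℝ := fun k => if h : k < m then w (σ ⟨k, h⟩) else 0
  have hv : ∀ k : Fin m, w (σ k) = v k := fun k => by simp [v]
  simp only [lovaszSum, hv]
  rw [Fin.sum_univ_eq_sum_range
      (fun k => v k * (G (σ.initialSegment (k + 1)) - G (σ.initialSegment k))),
    Fin.sum_univ_eq_sum_range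
      (fun k => v k * (H (σ.initialSegment (k + 1)) - H (σ.initialSegment k)))]
  refine sum_range_mul_sub_le_of_antitone (fun k hk => ?_) hGH
    (by rwa [initialSegment_zero]) (by rwa [initialSegment_of_le σ le_rfl])
  simp only [v, dif_pos hk, dif_pos (k.lt_succ_self.trans hk)]
  exact hw (Fin.mk_le_mk.mpr k.le_succ)

variable (F : Finset (Fin m) → ℝ)

def greedyVec : Fin m → ℝ :=
  fun i => F (σ.initialSegment (σ.symm i + 1)) - F (σ.initialSegment (σ.symm i))

lemma lovaszSum_eq_dotProduct_greedyVec (w : Fin m → ℝ) :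
    σ.lovaszSum F w = w ⬝ᵥ σ.greedyVec F := by
  rw [dotProduct, ← Equiv.sum_comp σ]
  simp [lovaszSum, greedyVec]

lemma sum_greedyVec_initialSegment (hF0 : F ∅ = 0) (n : ℕ) :
    ∑ i ∈ σ.initialSegment n, σ.greedyVec F i = F (σ.initialSegment n) := by
  induction n with
  | zero => simp [initialSegment_zero, hF0]
  | succ n ih =>
    rcases lt_or_ge n m with h | h
    · obtain ⟨i, rfl⟩ : ∃ i, n = σ.symm i := ⟨σ ⟨n, h⟩, by simp⟩
      rw [initialSegment_symm_succ, sum_insert (σ.notMem_initialSegment_symm i), ih, greedyVec,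
        initialSegment_symm_succ, sub_add_cancel]
    · rwa [σ.initialSegment_of_le (h.trans n.le_succ), ← σ.initialSegment_of_le h]

lemma greedyVec_le_sub (hFsub : ∀ A B, F (A ∪ B) + F (A ∩ B) ≤ F A + F B) (i : Fin m)
    {C : Finset (Fin m)} (hC : C ⊆ σ.initialSegment (σ.symm i)) :
    σ.greedyVec F i ≤ F (insert i C) - F C := by
  have h := hFsub (σ.initialSegment (σ.symm i)) (insert i C)
  rw [union_insert, union_eq_left.2 hC, ← initialSegment_symm_succ,
    inter_insert_of_notMem (σ.notMem_initialSegment_symm i), inter_eq_right.2 hC] at h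
  rw [greedyVec]
  linarith

lemma sum_greedyVec_le (hF0 : F ∅ = 0) (hFsub : ∀ A B, F (A ∪ B) + F (A ∩ B) ≤ F A + F B)
    (B : Finset (Fin m)) : ∑ i ∈ B, σ.greedyVec F i ≤ F B := by
  induction B using Finset.induction_on_max_value (fun i => σ.symm i) with
  | empty => simp [hF0]
  | insert i C hi hmax ih =>
    have hC : C ⊆ σ.initialSegment (σ.symm i) := fun j hj =>
      mem_initialSegment.2 ((hmax j hj).lt_of_ne fun h => hi (σ.symm.injective h ▸ hj))
    rw [sum_insert hi]
    linarith [σ.greedyVec_le_sub F hFsub i hC]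

lemma dotProduct_greedyVec_le_lovaszSum (hF0 : F ∅ = 0)
    (hFsub : ∀ A B, F (A ∪ B) + F (A ∩ B) ≤ F A + F B) (τ : Equiv.Perm (Fin m))
    {w : Fin m → ℝ} (hw : Antitone fun k => w (τ k)) :
    w ⬝ᵥ σ.greedyVec F ≤ τ.lovaszSum F w := by
  rw [τ.dotProduct_eq_lovaszSum]
  refine τ.lovaszSum_le_of_antitone hw (fun n => σ.sum_greedyVec_le F hF0 hFsub _)
    (by simp [hF0]) ?_
  simpa [σ.initialSegment_of_le le_rfl] using σ.sum_greedyVec_initialSegment F hF0 m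

lemma initialSegment_card_eq_of_antitone (A : Finset (Fin m))
    (hA : Antitone fun k => if σ k ∈ A then (1 : ℝ) else 0) :
    σ.initialSegment #A = A := by
  have hdown : ∀ i j, σ.symm j ≤ σ.symm i → i ∈ A → j ∈ A := by
    intro i j hji hi
    by_contra hj
    exact absurd (hA hji) (by simp [hi, hj])
  ext i
  rw [mem_initialSegment]
  constructor
  · intro hi
    by_contra hiA
    have hsub : A ⊆ σ.initialSegment (σ.symm i) := fun j hj =>
      mem_initialSegment.2 (lt_of_not_ge fun h => hiA (hdown j i h hj))
    have := card_le_card hsub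
    rw [card_initialSegment] at this
    omega
  · intro hi
    have hsub : σ.initialSegment (σ.symm i + 1) ⊆ A := fun j hj =>
      hdown i j (Nat.lt_succ_iff.1 (mem_initialSegment.1 hj)) hi
    have := card_le_card hsub
    rw [card_initialSegment_succ] at this
    omega

lemma lovaszSum_indicator (hF0 : F ∅ = 0) (A : Finset (Fin m))
    (hA : Antitone fun k => if σ k ∈ A then (1 : ℝ) else 0) :
    σ.lovaszSum F (fun i => if i ∈ A then 1 else 0) = F A := by
  rw [lovaszSum_eq_dotProduct_greedyVec]
  simp only [dotProduct, ite_mul, one_mul, zero_mul, sum_ite_mem, univ_inter]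
  rw [← σ.initialSegment_card_eq_of_antitone A hA, sum_greedyVec_initialSegment σ F hF0]

end Equiv.Perm

theorem lovasz_extension_properties_general (m : ℕ)
    (F : Finset (Fin m) → ℝ)
    (hF0 : F ∅ = 0)
    (hFsub : ∀ A B : Finset (Fin m), F (A ∪ B) + F (A ∩ B) ≤ F A + F B)
    (L : (Fin m → ℝ) → ℝ)
    (hL : ∀ (w : Fin m → ℝ) (σ : Equiv.Perm (Fin m)),
      Antitone (fun k => w (σ k)) →
      L w = ∑ k : Fin m,
        w (σ k) * (F ((Finset.Iic k).image σ) - F ((Finset.Iio k).image σ))) :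
    ConvexOn ℝ Set.univ L ∧
    (∀ c : ℝ, 0 ≤ c → ∀ w : Fin m → ℝ, L (c • w) = c * L w) ∧
    (∀ A : Finset (Fin m), L (fun i => if i ∈ A then (1 : ℝ) else 0) = F A) := by
  have hLsum : ∀ (w : Fin m → ℝ) (σ : Equiv.Perm (Fin m)), Antitone (fun k => w (σ k)) →
      L w = σ.lovaszSum F w := fun w σ hσ => by
    simp only [hL w σ hσ, Equiv.Perm.lovaszSum, σ.image_Iic_eq_initialSegment,
      σ.image_Iio_eq_initialSegment]
  have hLgreedy : ∀ (w : Fin m → ℝ) (σ : Equiv.Perm (Fin m)), Antitone (fun k => w (σ k)) →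
      L w = w ⬝ᵥ σ.greedyVec F := fun w σ hσ =>
    (hLsum w σ hσ).trans (σ.lovaszSum_eq_dotProduct_greedyVec F w)
  refine ⟨convexOn_univ_of_forall_exists_linearMap_le fun w => ?_, fun c hc w => ?_, fun A => ?_⟩
  · obtain ⟨σ, hσ⟩ := exists_perm_antitone w
    refine ⟨(dotProductBilin ℝ ℝ).flip (σ.greedyVec F), (hLgreedy w σ hσ).symm, fun v => ?_⟩
    obtain ⟨τ, hτ⟩ := exists_perm_antitone v
    rw [hLsum v τ hτ]
    exact σ.dotProduct_greedyVec_le_lovaszSum F hF0 hFsub τ hτ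
  · obtain ⟨σ, hσ⟩ := exists_perm_antitone w
    rw [hLgreedy w σ hσ, hLgreedy (c • w) σ (hσ.const_mul hc), smul_dotProduct, smul_eq_mul]
  · obtain ⟨σ, hσ⟩ := exists_perm_antitone fun i => if i ∈ A then (1 : ℝ) else 0
    rw [hLsum _ σ hσ, σ.lovaszSum_indicator F hF0 A hσ]

/-- let `F` be a non-decreasing submodular set function with
`F ∅ = 0` and let `L` be its Lovász extension (characterized by the sorted-sum
formula for every decreasing enumeration of the coordinates). Then `L` is
convex, positively homogeneous, and extends `F` on indicator vectors. -/
theorem lovasz_extension_properties (m : ℕ)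
    (F : Finset (Fin m) → ℝ)
    (hF0 : F ∅ = 0)
    (hFmono : ∀ A B : Finset (Fin m), A ⊆ B → F A ≤ F B)
    (hFsub : ∀ A B : Finset (Fin m), F (A ∪ B) + F (A ∩ B) ≤ F A + F B)
    (L : (Fin m → ℝ) → ℝ)
    (hL : ∀ (w : Fin m → ℝ) (σ : Equiv.Perm (Fin m)),
      Antitone (fun k => w (σ k)) →
      L w = ∑ k : Fin m,
        w (σ k) * (F ((Finset.Iic k).image σ) - F ((Finset.Iio k).image σ))) :
    ConvexOn ℝ Set.univ L ∧
    (∀ c : ℝ, 0 ≤ c → ∀ w : Fin m → ℝ, L (c • w) = c * L w) ∧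
    (∀ A : Finset (Fin m), L (fun i => if i ∈ A then (1 : ℝ) else 0) = F A) :=
  lovasz_extension_properties_general m F hF0 hFsub L hL
end

section
/- For F(A) = Σ_{v∈V} h(d_A(v)) with h tractable (non-decreasing, concave, h(0)=0), the Lovász extension of F evaluated at |X| (entrywise absolute value of a symmetric matrix X with zero diagonal contributions) equals Ω(X) = Σ_{i=1}^n Σ_{k=0}^{n-2} (h(k+1) − h(k)) |X_{i,(k)}|, where for each row i, |X_{i,(0)}| ≥ |X_{i,(1)}| ≥ ... are the off-diagonal entries of row i sorted by decreasing absolute value. -/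
/-!
Sort the edge weights decreasingly. Adding an edge `e` to a prefix of the order raises the degree
of each endpoint `v` of `e` by one, so the increment of `F` splits over the endpoints as
`h (d + 1) - h d`, where `d` counts the earlier edges at `v`. Regrouping the Lovász sum by vertex,
the edges at `v` are met in decreasing order of weight with `d = 0, 1, …, n - 2`; since an antitone
enumeration of a finite family of values is unique, this is the enumeration of row `v` given by `τ v`.
-/

open Finset

/-- Degree of vertex `v` in a set `A` of edges of the complete graph. -/
def edgeDeg {n : ℕ} (A : Finset {e : Sym2 (Fin n) // ¬ e.IsDiag}) (v : Fin n) : ℕ :=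
  (A.filter (fun e => v ∈ e.1)).card

theorem Finset.card_filter_lt_orderEmbOfFin {α : Type*} [LinearOrder α] (s : Finset α) {m : ℕ}
    (hs : #s = m) (j : Fin m) : #{x ∈ s | x < s.orderEmbOfFin hs j} = j := by
  have : {x ∈ s | x < s.orderEmbOfFin hs j} = (Iio j).map (s.orderEmbOfFin hs).toEmbedding := by
    ext x
    constructor
    · intro hx
      obtain ⟨hxs, hlt⟩ := mem_filter.mp hx
      obtain ⟨i, rfl⟩ : x ∈ Set.range (s.orderEmbOfFin hs) := by simpa using hxs
      simpa using hlt
    · intro hx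
      obtain ⟨i, hi, rfl⟩ := mem_map.mp hx
      simpa using hi
  rw [this, card_map, Fin.card_Iio]

theorem Finset.sum_card_filter_lt_eq_sum_orderEmbOfFin {α M : Type*} [LinearOrder α]
    [AddCommMonoid M] (s : Finset α) (f : ℕ → α → M) :
    ∑ k ∈ s, f #{x ∈ s | x < k} k = ∑ j : Fin #s, f j (s.orderEmbOfFin rfl j) := by
  have := sum_map univ (s.orderEmbOfFin rfl).toEmbedding fun k => f #{x ∈ s | x < k} k
  rw [map_orderEmbOfFin_univ] at this
  simp only [this, RelEmbedding.coe_toEmbedding, card_filter_lt_orderEmbOfFin]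

theorem exists_equiv_fin_antitone {α β : Type*} [Fintype α] [LinearOrder β] (w : α → β) :
    ∃ σ : Fin (Fintype.card α) ≃ α, Antitone (w ∘ σ) := by
  let e := (Fintype.equivFin α).symm
  let f : Fin (Fintype.card α) → βᵒᵈ := fun k => OrderDual.toDual (w (e k))
  exact ⟨(Tuple.sort f).trans e, (Tuple.monotone_sort f).dual_right⟩

theorem Fin.sum_comp_equiv_eq_of_antitone {β R M : Type*} [LinearOrder R] [AddCommMonoid M]
    (f : β → R) (g : ℕ → R → M) {m m' : ℕ} (e : Fin m ≃ β) (e' : Fin m' ≃ β)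
    (he : Antitone (f ∘ e)) (he' : Antitone (f ∘ e')) :
    ∑ j : Fin m, g j (f (e j)) = ∑ j : Fin m', g j (f (e' j)) := by
  obtain rfl : m = m' := by simpa using Fintype.card_congr (e.trans e'.symm)
  have := Tuple.unique_antitone (f := f ∘ e) (σ := 1) (τ := e'.trans e.symm)
    he (by simpa [Function.comp_def] using he')
  refine sum_congr rfl fun j _ => ?_
  exact congrArg (g j) (by simpa using congrFun this j)

section LovaszSum

variable {α : Type*} [DecidableEq α] {N : ℕ}

def lovaszSum (F : Finset α → ℝ) (σ : Fin N ≃ α) (w : α → ℝ) : ℝ :=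
  ∑ k, w (σ k) * (F ((Iic k).image σ) - F ((Iio k).image σ))

variable (σ : Fin N ≃ α)

theorem card_filter_image_Iio (P : α → Prop) [DecidablePred P] (k : Fin N) :
    #{a ∈ (Iio k).image σ | P a} = #{i ∈ {i | P (σ i)} | i < k} := by
  rw [filter_image, card_image_of_injective _ σ.injective, filter_filter]
  congr 1
  ext i
  simp [and_comm]

theorem card_filter_image_Iic (P : α → Prop) [DecidablePred P] (k : Fin N) :
    #{a ∈ (Iic k).image σ | P a} = #{i ∈ {i | P (σ i)} | i < k} + if P (σ k) then 1 else 0 := by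
  rw [← Iio_insert, image_insert, filter_insert, ← card_filter_image_Iio]
  split_ifs
  · rw [card_insert_of_notMem (by simp), add_comm]
  · rfl

theorem lovaszSum_sum_card_filter {ι : Type*} [Fintype ι] (p : ι → α → Prop)
    [∀ v, DecidablePred (p v)] (h : ℕ → ℝ) (w : α → ℝ) :
    lovaszSum (fun A => ∑ v, h #{a ∈ A | p v a}) σ w =
      ∑ v, ∑ j : Fin #{i | p v (σ i)},
        (h (j + 1) - h j) * w (σ (({i | p v (σ i)} : Finset (Fin N)).orderEmbOfFin rfl j)) := by
  have increment : ∀ k,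
      ∑ v, h #{a ∈ (Iic k).image σ | p v a} - ∑ v, h #{a ∈ (Iio k).image σ | p v a} =
        ∑ v, if p v (σ k) then
          h (#{i ∈ {i | p v (σ i)} | i < k} + 1) - h #{i ∈ {i | p v (σ i)} | i < k} else 0 := by
    intro k
    rw [← sum_sub_distrib]
    refine sum_congr rfl fun v _ => ?_
    rw [card_filter_image_Iic, card_filter_image_Iio]
    split_ifs <;> simp
  simp_rw [lovaszSum, increment, mul_sum]
  rw [sum_comm]
  refine sum_congr rfl fun v _ => ?_
  refine Eq.trans ?_
    (sum_card_filter_lt_eq_sum_orderEmbOfFin _ fun c k => (h (c + 1) - h c) * w (σ k))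
  rw [sum_filter]
  refine sum_congr rfl fun k _ => ?_
  split_ifs <;> simp [mul_comm]

end LovaszSum

noncomputable def incidentEquivNe {V : Type*} (v : V) :
    {u : V // u ≠ v} ≃ {e : {e : Sym2 V // ¬ e.IsDiag} // v ∈ e.1} where
  toFun u := ⟨⟨s(v, u), by simpa using u.2.symm⟩, Sym2.mem_mk_left v u⟩
  invFun e := ⟨Sym2.Mem.other e.2, Sym2.other_ne e.1.2 e.2⟩
  left_inv u := Subtype.ext (Sym2.congr_right.mp (Sym2.other_spec _))
  right_inv e := Subtype.ext (Subtype.ext (Sym2.other_spec e.2))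

theorem lovasz_extension_degree_prior_general (n : ℕ) (h : ℕ → ℝ)
    (F : Finset {e : Sym2 (Fin n) // ¬ e.IsDiag} → ℝ)
    (hF : ∀ A, F A = ∑ v : Fin n, h (edgeDeg A v))
    (L : ({e : Sym2 (Fin n) // ¬ e.IsDiag} → ℝ) → ℝ)
    -- `L` is the Lovász extension of `F`:
    (hL : ∀ (w : {e : Sym2 (Fin n) // ¬ e.IsDiag} → ℝ)
        (σ : Fin (Fintype.card {e : Sym2 (Fin n) // ¬ e.IsDiag}) ≃
          {e : Sym2 (Fin n) // ¬ e.IsDiag}),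
      Antitone (fun k => w (σ k)) →
      L w = ∑ k, w (σ k) *
        (F ((Finset.Iic k).image σ) - F ((Finset.Iio k).image σ)))
    (X : Matrix (Fin n) (Fin n) ℝ)
    (w : {e : Sym2 (Fin n) // ¬ e.IsDiag} → ℝ)
    (hw : ∀ (i j : Fin n) (hd : ¬ (s(i, j) : Sym2 (Fin n)).IsDiag),
      w ⟨s(i, j), hd⟩ = |X i j|)
    -- for each row `i`, `τ i` enumerates the off-diagonal entries of row `i`
    -- in decreasing order of absolute value:
    (τ : ∀ i : Fin n, Fin (n - 1) ≃ {j : Fin n // j ≠ i})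
    (hτ : ∀ i : Fin n, Antitone (fun k => |X i ((τ i k) : Fin n)|)) :
    L w = ∑ i : Fin n, ∑ k : Fin (n - 1),
      (h ((k : ℕ) + 1) - h (k : ℕ)) * |X i ((τ i k) : Fin n)| := by
  obtain ⟨σ, hσ⟩ := exists_equiv_fin_antitone w
  rw [hL w σ hσ]
  change lovaszSum F σ w = _
  obtain rfl : F = fun A => ∑ v, h #{e ∈ A | v ∈ e.1} := funext hF
  rw [lovaszSum_sum_card_filter]
  refine sum_congr rfl fun v _ => ?_
  let s : Finset (Fin _) := {i | v ∈ (σ i).1}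
  let byRank : Fin #s ≃ {e : {e : Sym2 (Fin n) // ¬ e.IsDiag} // v ∈ e.1} :=
    (s.orderIsoOfFin rfl).toEquiv.trans (σ.subtypeEquiv (by simp [s]))
  let byRow : Fin (n - 1) ≃ {e : {e : Sym2 (Fin n) // ¬ e.IsDiag} // v ∈ e.1} :=
    (τ v).trans (incidentEquivNe v)
  have hrow : ∀ j, w (byRow j) = |X v (τ v j)| := fun j => hw v _ _
  refine (Fin.sum_comp_equiv_eq_of_antitone (fun e => w e.1) (fun j x => (h (j + 1) - h j) * x)
    byRank byRow ?_ ?_).trans ?_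
  · exact fun i j hij => hσ ((s.orderEmbOfFin rfl).monotone hij)
  · simpa only [Function.comp_def, hrow] using hτ v
  · simp only [hrow]

/-- for `F(A) = ∑_v h(d_A(v))` with `h` tractable, the Lovász
extension of `F` evaluated at the entrywise absolute values of a symmetric
matrix `X` equals `Ω(X) = ∑_i ∑_k (h(k+1) − h(k)) |X_{i,(k)}|`, where each row's
off-diagonal entries are sorted by decreasing absolute value. -/
theorem lovasz_extension_degree_prior (n : ℕ) (h : ℕ → ℝ)
    (h0 : h 0 = 0)
    (hmono : ∀ k : ℕ, h k ≤ h (k + 1))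
    (hconc : ∀ k : ℕ, 1 ≤ k → h (k + 1) - h k ≤ h k - h (k - 1))
    (F : Finset {e : Sym2 (Fin n) // ¬ e.IsDiag} → ℝ)
    (hF : ∀ A, F A = ∑ v : Fin n, h (edgeDeg A v))
    (L : ({e : Sym2 (Fin n) // ¬ e.IsDiag} → ℝ) → ℝ)
    -- `L` is the Lovász extension of `F`:
    (hL : ∀ (w : {e : Sym2 (Fin n) // ¬ e.IsDiag} → ℝ)
        (σ : Fin (Fintype.card {e : Sym2 (Fin n) // ¬ e.IsDiag}) ≃
          {e : Sym2 (Fin n) // ¬ e.IsDiag}),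
      Antitone (fun k => w (σ k)) →
      L w = ∑ k, w (σ k) *
        (F ((Finset.Iic k).image σ) - F ((Finset.Iio k).image σ)))
    (X : Matrix (Fin n) (Fin n) ℝ) (hX : X.IsSymm)
    (w : {e : Sym2 (Fin n) // ¬ e.IsDiag} → ℝ)
    (hw : ∀ (i j : Fin n) (hd : ¬ (s(i, j) : Sym2 (Fin n)).IsDiag),
      w ⟨s(i, j), hd⟩ = |X i j|)
    -- for each row `i`, `τ i` enumerates the off-diagonal entries of row `i`
    -- in decreasing order of absolute value:
    (τ : ∀ i : Fin n, Fin (n - 1) ≃ {j : Fin n // j ≠ i})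
    (hτ : ∀ i : Fin n, Antitone (fun k => |X i ((τ i k) : Fin n)|)) :
    L w = ∑ i : Fin n, ∑ k : Fin (n - 1),
      (h ((k : ℕ) + 1) - h (k : ℕ)) * |X i ((τ i k) : Fin n)| :=
  lovasz_extension_degree_prior_general n h F hF L hL X w hw τ hτ
end

section
/- Let c_0 ≥ c_1 ≥ ... ≥ c_{m-1} ≥ 0 and w ∈ ℝ^m with |w_1| ≥ |w_2| ≥ ... ≥ |w_m| (already sorted). If the values u_k = |w_k| − c_k are strictly decreasing and all positive, then the minimizer of Σ_k c_k|x_{(k)}| + (1/2)‖x − w‖² is x*_k = sign(w_k)(|w_k| − c_k); i.e., when no ties or sign flips occur the proximal operator applies per-rank shrinkage. -/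
open Finset

/-!
Since `c` is antitone, the rearrangement inequality gives `Ω(y) ≥ ∑ c_k |y_k|` for every `y`,
so `f` dominates the separable function `∑ (c_k |y_k| + (y_k - w_k)² / 2)`. Each summand is
minimised by the soft threshold `sign(w_k)(|w_k| - c_k)`, and because the `|w_k| - c_k` are
decreasing, the vector of soft thresholds is already sorted, so `f` agrees with the separable
function there.
-/

lemma sortedAbs_eq_of_antitone {m : ℕ} {x : Fin m → ℝ} (hx : Antitone fun k => |x k|) :
    sortedAbs x = fun k => |x k| := by
  have hsort : Tuple.sort (fun i => -|x i|) = Equiv.refl _ :=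
    Tuple.sort_eq_refl_iff_monotone.mpr fun i j hij => neg_le_neg (hx hij)
  unfold sortedAbs
  rw [hsort]
  rfl

lemma sum_mul_abs_le_omegaReg {m : ℕ} {c : ℕ → ℝ} (hc : Antitone c) (y : Fin m → ℝ) :
    ∑ k : Fin m, c k * |y k| ≤ omegaReg c y := by
  set σ := Tuple.sort (fun i => -|y i|)
  have hyσ : Antitone fun k => |y (σ k)| := fun i j hij =>
    neg_le_neg_iff.mp (Tuple.monotone_sort (fun i => -|y i|) hij)
  have hcσ : Antitone fun k : Fin m => c k := fun i j hij => hc hij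
  have h := (hcσ.monovary hyσ).sum_smul_comp_perm_le_sum_smul (σ := σ⁻¹)
  simpa [Equiv.Perm.inv_def, omegaReg, sortedAbs, σ] using h

lemma abs_sign_mul_sub {w c : ℝ} (hw : w ≠ 0) (hcw : c ≤ |w|) :
    |Real.sign w * (|w| - c)| = |w| - c := by
  rcases hw.lt_or_gt with h | h
  · rw [Real.sign_of_neg h, neg_one_mul, abs_neg, abs_of_nonneg (sub_nonneg.mpr hcw)]
  · rw [Real.sign_of_pos h, one_mul, abs_of_nonneg (sub_nonneg.mpr hcw)]

lemma sq_sign_mul_sub_sub {w c : ℝ} (hw : w ≠ 0) :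
    (Real.sign w * (|w| - c) - w) ^ 2 = c ^ 2 := by
  rcases hw.lt_or_gt with h | h
  · rw [Real.sign_of_neg h, abs_of_neg h]; ring
  · rw [Real.sign_of_pos h, abs_of_pos h]; ring

lemma softThreshold_le {w c : ℝ} (hw : w ≠ 0) (hcw : c ≤ |w|) (t : ℝ) :
    c * |Real.sign w * (|w| - c)| + 1 / 2 * (Real.sign w * (|w| - c) - w) ^ 2
      ≤ c * |t| + 1 / 2 * (t - w) ^ 2 := by
  have hdist : (|t| - |w|) ^ 2 ≤ (t - w) ^ 2 :=
    sq_le_sq.mpr (abs_abs_sub_abs_le_abs_sub t w)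
  rw [abs_sign_mul_sub hw hcw, sq_sign_mul_sub_sub hw]
  -- with `r = |t|`: `c r + (r - |w|)² / 2 - (c (|w| - c) + c² / 2) = (r - |w| + c)² / 2`
  nlinarith [sq_nonneg (|t| - |w| + c)]

theorem prox_per_rank_shrinkage_general (m : ℕ) (c : ℕ → ℝ) (w : Fin m → ℝ)
    (hnonneg : ∀ k, 0 ≤ c k)
    (hcanti : ∀ k, c (k + 1) ≤ c k)
    (hu_strict : StrictAnti (fun k : Fin m => |w k| - c k))
    (hu_pos : ∀ k : Fin m, 0 < |w k| - c k) :
    let f : (Fin m → ℝ) → ℝ :=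
      fun x => omegaReg c x + (1 / 2) * ∑ i, (x i - w i) ^ 2
    let xstar : Fin m → ℝ := fun k => Real.sign (w k) * (|w k| - c k)
    ∀ y : Fin m → ℝ, f xstar ≤ f y := by
  intro f xstar y
  have hw : ∀ k, w k ≠ 0 := fun k => abs_pos.mp (by linarith [hu_pos k, hnonneg k])
  have hcw : ∀ k : Fin m, c k ≤ |w k| := fun k => (sub_pos.mp (hu_pos k)).le
  have hsort : sortedAbs xstar = fun k => |xstar k| := by
    refine sortedAbs_eq_of_antitone fun i j hij => ?_
    simpa only [xstar, abs_sign_mul_sub (hw _) (hcw _)] using hu_strict.antitone hij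
  calc f xstar = ∑ k : Fin m, (c k * |xstar k| + 1 / 2 * (xstar k - w k) ^ 2) := by
        simp only [f, omegaReg, hsort, mul_sum, sum_add_distrib]
    _ ≤ ∑ k : Fin m, (c k * |y k| + 1 / 2 * (y k - w k) ^ 2) :=
        sum_le_sum fun k _ => softThreshold_le (hw k) (hcw k) (y k)
    _ ≤ f y := by
        rw [sum_add_distrib, ← mul_sum]
        exact add_le_add_left (sum_mul_abs_le_omegaReg (antitone_nat_of_succ_le hcanti) y) _

/-- if `|w|` is already sorted decreasingly and the shrunken
values `u_k = |w_k| − c_k` are strictly decreasing and positive, then the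
proximal operator acts by per-rank shrinkage:
`x*_k = sign(w_k)(|w_k| − c_k)` minimizes `Ω(x) + (1/2)‖x − w‖²`. -/
theorem prox_per_rank_shrinkage (m : ℕ) (c : ℕ → ℝ) (w : Fin m → ℝ)
    (hm : 1 ≤ m)
    (hnonneg : ∀ k, 0 ≤ c k)
    (hcanti : ∀ k, c (k + 1) ≤ c k)
    (hw_sorted : Antitone (fun k : Fin m => |w k|))
    (hu_strict : StrictAnti (fun k : Fin m => |w k| - c k))
    (hu_pos : ∀ k : Fin m, 0 < |w k| - c k) :
    let f : (Fin m → ℝ) → ℝ :=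
      fun x => omegaReg c x + (1 / 2) * ∑ i, (x i - w i) ^ 2
    let xstar : Fin m → ℝ := fun k => Real.sign (w k) * (|w k| - c k)
    ∀ y : Fin m → ℝ, f xstar ≤ f y :=
  prox_per_rank_shrinkage_general m c w hnonneg hcanti hu_strict hu_pos
end
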